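/- Let p : ℝ → ℝ be a probability density function and suppose y ↦ e^y p(y) is Lebesgue integrable. For ω ∈ ℝ set M(iω) := ∫_ℝ e^{iωy} p(y) dy and M(1 + iω) := ∫_ℝ e^{(1+iω)y} p(y) dy. Assume that ω ↦ Im(M(iω))/ω and ω ↦ Im(M(1+iω))/ω are both Lebesgue integrable on (0, ∞). Then ∫_ℝ |e^y − 1| p(y) dy = (2/π) ∫_0^∞ Re[ (M(1 + iω) − M(iω)) / (iω) ] dω. -/

import Mathlib

/-!
With `g y = (e^y - 1) p y`, the integrand on the right is `(∫ sin (ω y) g y dy) / ω`.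
Integrating it over `ω ∈ [1/R, R]` and exchanging the integrals turns the kernel into
`Si (R y) - Si (y / R)`, which is bounded and tends to `sign y · π/2` by Dirichlet's integral
`∫_0^∞ sin t / t dt = π/2`; dominated convergence then gives
`(π/2) ∫ sign y · g y dy = (π/2) ∫ |e^y - 1| p y dy`. Dirichlet's integral itself follows from
`1/t = ∫_0^∞ e^{-t u} du` and Fubini, with remainder of size `O(1/R)`.
-/

open MeasureTheory Real Set Filter Topology

noncomputable def sineIntegral (x : ℝ) : ℝ := ∫ t in (0 : ℝ)..x, sinc t

lemma continuous_sineIntegral : Continuous sineIntegral :=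
  intervalIntegral.continuous_primitive (fun _ _ ↦ continuous_sinc.intervalIntegrable _ _) 0

lemma sineIntegral_zero : sineIntegral 0 = 0 := by simp [sineIntegral]

lemma sineIntegral_neg (x : ℝ) : sineIntegral (-x) = -sineIntegral x := by
  have := intervalIntegral.integral_comp_neg (a := 0) (b := x) sinc
  simp only [sinc_neg, neg_zero] at this
  rw [sineIntegral, sineIntegral, this, intervalIntegral.integral_symm]

lemma abs_sineIntegral_le_abs (x : ℝ) : |sineIntegral x| ≤ |x| := by
  rw [sineIntegral]
  simpa using intervalIntegral.norm_integral_le_of_norm_le_const (a := 0) (b := x) (C := 1)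
    (f := sinc) fun t _ ↦ abs_sinc_le_one t

lemma integral_exp_neg_mul_sin (u R : ℝ) :
    ∫ t in (0 : ℝ)..R, exp (-t * u) * sin t
      = (1 - exp (-R * u) * (cos R + u * sin R)) / (1 + u ^ 2) := by
  have hderiv : ∀ t, HasDerivAt (fun t ↦ -(exp (-t * u) * (cos t + u * sin t)) / (1 + u ^ 2))
      (exp (-t * u) * sin t) t := by
    intro t
    have h : HasDerivAt (fun t ↦ -(exp (-t * u) * (cos t + u * sin t)) / (1 + u ^ 2))
        (-(exp (-t * u) * (-1 * u) * (cos t + u * sin t)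
          + exp (-t * u) * (-sin t + u * cos t)) / (1 + u ^ 2)) t :=
      ((((hasDerivAt_neg t).mul_const u).exp).mul
        ((hasDerivAt_cos t).add ((hasDerivAt_sin t).const_mul u))).neg.div_const (1 + u ^ 2)
    convert h using 1
    field_simp
    ring
  rw [intervalIntegral.integral_eq_sub_of_hasDerivAt (fun t _ ↦ hderiv t)
    ((by fun_prop : Continuous fun t ↦ exp (-t * u) * sin t).intervalIntegrable _ _)]
  simp only [neg_mul, neg_zero, zero_mul, exp_zero, cos_zero, sin_zero, mul_zero, add_zero, mul_one]
  ring

lemma integral_Ioi_exp_neg_mul {t : ℝ} (ht : 0 < t) : ∫ u in Ioi 0, exp (-t * u) = t⁻¹ := by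
  simpa using integral_exp_mul_Ioi (neg_neg_of_pos ht) 0

lemma abs_exp_neg_mul_cos_add_mul_sin_div_le (R : ℝ) {u : ℝ} (hu : 0 ≤ u) :
    |exp (-R * u) * (cos R + u * sin R) / (1 + u ^ 2)| ≤ 2 * exp (-R * u) := by
  have hnum : |cos R + u * sin R| ≤ 2 * (1 + u ^ 2) := by
    calc |cos R + u * sin R| ≤ |cos R| + u * |sin R| := by
          simpa [abs_mul, abs_of_nonneg hu] using abs_add_le (cos R) (u * sin R)
      _ ≤ 1 + u * 1 := by gcongr <;> first | exact abs_cos_le_one R | exact abs_sin_le_one R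
      _ ≤ 2 * (1 + u ^ 2) := by nlinarith [sq_nonneg (u - 1)]
  rw [abs_div, abs_mul, abs_of_pos (exp_pos _), abs_of_pos (by positivity : (0 : ℝ) < 1 + u ^ 2),
    div_le_iff₀ (by positivity)]
  calc exp (-R * u) * |cos R + u * sin R| ≤ exp (-R * u) * (2 * (1 + u ^ 2)) := by gcongr
    _ = _ := by ring

lemma integrableOn_exp_neg_mul_cos_add_mul_sin_div {R : ℝ} (hR : 0 < R) :
    IntegrableOn (fun u ↦ exp (-R * u) * (cos R + u * sin R) / (1 + u ^ 2)) (Ioi 0) :=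
  ((exp_neg_integrableOn_Ioi 0 hR).const_mul 2).mono'
    ((by fun_prop : Measurable fun u : ℝ ↦ exp (-R * u) * (cos R + u * sin R) / (1 + u ^ 2))
      |>.aestronglyMeasurable) <|
    (ae_restrict_iff' measurableSet_Ioi).2 <| .of_forall fun _ hu ↦
      abs_exp_neg_mul_cos_add_mul_sin_div_le R (le_of_lt hu)

lemma sineIntegral_eq_pi_div_two_sub {R : ℝ} (hR : 0 < R) :
    sineIntegral R = π / 2 - ∫ u in Ioi 0, exp (-R * u) * (cos R + u * sin R) / (1 + u ^ 2) := by
  set K : ℝ → ℝ → ℝ := fun t u ↦ exp (-t * u) * sin t with hK_def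
  have hK_meas : AEStronglyMeasurable (Function.uncurry K)
      ((volume.restrict (Ioc 0 R)).prod (volume.restrict (Ioi 0))) := by
    simp only [hK_def]; fun_prop
  have hK_Ioi : ∀ t ∈ Ioc 0 R, ∫ u in Ioi 0, K t u = sinc t := fun t ht ↦ by
    rw [integral_mul_const, integral_Ioi_exp_neg_mul ht.1, sinc_of_ne_zero ht.1.ne', inv_mul_eq_div]
  have hK : Integrable (Function.uncurry K)
      ((volume.restrict (Ioc 0 R)).prod (volume.restrict (Ioi 0))) := by
    refine (integrable_prod_iff hK_meas).2 ⟨?_, ?_⟩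
    · filter_upwards [ae_restrict_mem measurableSet_Ioc] with t ht
      exact (exp_neg_integrableOn_Ioi 0 ht.1).mul_const (sin t)
    · refine (integrable_const (1 : ℝ)).mono' hK_meas.norm.integral_prod_right' ?_
      filter_upwards [ae_restrict_mem measurableSet_Ioc] with t ht
      have hnorm : ∫ u in Ioi 0, ‖K t u‖ = |sinc t| := by
        simp only [hK_def, norm_mul, norm_of_nonneg (exp_pos _).le, integral_mul_const,
          integral_Ioi_exp_neg_mul ht.1, sinc_of_ne_zero ht.1.ne', abs_div, abs_of_pos ht.1,
          Real.norm_eq_abs, inv_mul_eq_div]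
      simp only [Function.uncurry_apply_pair, hnorm, norm_abs_eq_norm]
      exact abs_sinc_le_one t
  have hK_Ioc : ∀ u, ∫ t in Ioc 0 R, K t u
      = (1 + u ^ 2)⁻¹ - exp (-R * u) * (cos R + u * sin R) / (1 + u ^ 2) := fun u ↦ by
    rw [← intervalIntegral.integral_of_le hR.le, integral_exp_neg_mul_sin, sub_div, one_div]
  calc sineIntegral R = ∫ t in Ioc 0 R, ∫ u in Ioi 0, K t u := by
        rw [sineIntegral, intervalIntegral.integral_of_le hR.le]
        exact setIntegral_congr_fun measurableSet_Ioc fun t ht ↦ (hK_Ioi t ht).symm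
    _ = ∫ u in Ioi 0, ∫ t in Ioc 0 R, K t u := integral_integral_swap hK
    _ = π / 2 - ∫ u in Ioi 0, exp (-R * u) * (cos R + u * sin R) / (1 + u ^ 2) := by
        simp only [hK_Ioc]
        rw [integral_sub integrable_inv_one_add_sq.integrableOn
          (integrableOn_exp_neg_mul_cos_add_mul_sin_div hR), integral_Ioi_inv_one_add_sq,
          arctan_zero, sub_zero]

lemma abs_sineIntegral_sub_pi_div_two_le {R : ℝ} (hR : 0 < R) :
    |sineIntegral R - π / 2| ≤ 2 / R := by
  rw [sineIntegral_eq_pi_div_two_sub hR, sub_sub_cancel_left, abs_neg]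
  calc |∫ u in Ioi 0, exp (-R * u) * (cos R + u * sin R) / (1 + u ^ 2)|
      ≤ ∫ u in Ioi 0, 2 * exp (-R * u) :=
        norm_integral_le_of_norm_le (f := fun u ↦ exp (-R * u) * (cos R + u * sin R) / (1 + u ^ 2))
          ((exp_neg_integrableOn_Ioi 0 hR).const_mul 2) <|
          (ae_restrict_iff' measurableSet_Ioi).2 <| .of_forall fun _ hu ↦
            abs_exp_neg_mul_cos_add_mul_sin_div_le R (le_of_lt hu)
    _ = 2 / R := by rw [integral_const_mul, integral_Ioi_exp_neg_mul hR, div_eq_mul_inv]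

lemma tendsto_sineIntegral_atTop : Tendsto sineIntegral atTop (𝓝 (π / 2)) := by
  rw [tendsto_iff_norm_sub_tendsto_zero]
  refine squeeze_zero' (g := fun R ↦ 2 / R) (.of_forall fun _ ↦ norm_nonneg _) ?_
    (tendsto_const_nhds.div_atTop tendsto_id)
  filter_upwards [eventually_gt_atTop 0] with R hR
  exact abs_sineIntegral_sub_pi_div_two_le hR

lemma abs_sineIntegral_le (x : ℝ) : |sineIntegral x| ≤ 4 := by
  wlog hx : 0 ≤ x generalizing x
  · simpa [sineIntegral_neg] using this (-x) (by linarith)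
  rcases le_or_gt x 1 with hx1 | hx1
  · exact (abs_sineIntegral_le_abs x).trans (by rw [abs_of_nonneg hx]; linarith)
  · have h := abs_sineIntegral_sub_pi_div_two_le (zero_lt_one.trans hx1)
    have h2 : 2 / x ≤ 2 := div_le_self zero_le_two hx1.le
    have h3 := abs_sub_abs_le_abs_sub (sineIntegral x) (π / 2)
    rw [abs_of_pos (half_pos pi_pos)] at h3
    linarith [pi_le_four]

lemma tendsto_sineIntegral_mul_atTop (y : ℝ) :
    Tendsto (fun R ↦ sineIntegral (R * y)) atTop (𝓝 (Real.sign y * (π / 2))) := by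
  rcases lt_trichotomy y 0 with hy | rfl | hy
  · have h := (tendsto_sineIntegral_atTop.comp (tendsto_id.atTop_mul_const (neg_pos.2 hy))).neg
    simpa [Function.comp_def, sineIntegral_neg, Real.sign_of_neg hy] using h
  · simp [sineIntegral_zero]
  · simpa [Function.comp_def, Real.sign_of_pos hy] using
      tendsto_sineIntegral_atTop.comp (tendsto_id.atTop_mul_const hy)

lemma integral_sin_mul_div (y a b : ℝ) :
    ∫ ω in a..b, sin (ω * y) / ω = sineIntegral (b * y) - sineIntegral (a * y) := by
  rcases eq_or_ne y 0 with rfl | hy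
  · simp
  have h_ae : ∀ᵐ ω, ω ∈ uIoc a b → sin (ω * y) / ω = y * sinc (ω * y) := by
    filter_upwards [Measure.ae_ne volume 0] with ω hω _
    rw [sinc_of_ne_zero (mul_ne_zero hω hy)]
    field_simp
  rw [intervalIntegral.integral_congr_ae h_ae, intervalIntegral.integral_const_mul,
    intervalIntegral.integral_comp_mul_right sinc hy, smul_eq_mul, ← mul_assoc,
    mul_inv_cancel₀ hy, one_mul, sineIntegral, sineIntegral,
    intervalIntegral.integral_interval_sub_left]
  all_goals exact continuous_sinc.intervalIntegrable _ _

lemma tendsto_intervalIntegral_inv_self_integral_Ioi {E : Type*} [NormedAddCommGroup E]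
    [NormedSpace ℝ E] {f : ℝ → E} (hf : IntegrableOn f (Ioi 0)) :
    Tendsto (fun R ↦ ∫ x in R⁻¹..R, f x) atTop (𝓝 (∫ x in Ioi 0, f x)) := by
  have hcover : AECover (volume.restrict (Ioi 0)) atTop fun R : ℝ ↦ Ioc R⁻¹ R :=
    (aecover_Ioi_of_Ioi tendsto_inv_atTop_zero).inter (aecover_Iic tendsto_id)
  refine (hcover.integral_tendsto_of_countably_generated hf).congr' ?_
  filter_upwards [eventually_ge_atTop 1] with R hR
  have hR₀ : (0 : ℝ) ≤ R⁻¹ := by positivity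
  rw [Measure.restrict_restrict_of_subset (Ioc_subset_Ioi_self.trans (Ioi_subset_Ioi hR₀)),
    intervalIntegral.integral_of_le ((inv_le_one_of_one_le₀ hR).trans hR)]

section SineTransform

variable {g : ℝ → ℝ}

lemma intervalIntegral_sin_transform_div (hg : Integrable g) {ε R : ℝ} (hε : 0 < ε)
    (hεR : ε ≤ R) :
    ∫ ω in ε..R, (∫ y, sin (ω * y) * g y) / ω
      = ∫ y, (sineIntegral (R * y) - sineIntegral (ε * y)) * g y := by
  set K : ℝ → ℝ → ℝ := fun ω y ↦ sin (ω * y) / ω * g y with hK_def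
  have hK_bound : ∀ ω ∈ Ioc ε R, ∀ y, ‖K ω y‖ ≤ ε⁻¹ * ‖g y‖ := fun ω hω y ↦ by
    have hω0 : 0 < ω := hε.trans hω.1
    rw [hK_def, norm_mul, norm_div, norm_of_nonneg hω0.le, ← one_div]
    gcongr
    · exact abs_sin_le_one _
    · exact hω.1.le
  have hK : Integrable (Function.uncurry K) ((volume.restrict (uIoc ε R)).prod volume) := by
    rw [uIoc_of_le hεR]
    refine ((hg.norm.comp_snd _).const_mul ε⁻¹).mono'
      (((by fun_prop : Measurable fun z : ℝ × ℝ ↦ sin (z.1 * z.2) / z.1).aestronglyMeasurable).mul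
        hg.1.comp_snd) ?_
    filter_upwards [Measure.quasiMeasurePreserving_fst.ae (ae_restrict_mem measurableSet_Ioc)]
      with z hz
    exact hK_bound z.1 hz z.2
  calc ∫ ω in ε..R, (∫ y, sin (ω * y) * g y) / ω = ∫ ω in ε..R, ∫ y, K ω y := by
        refine intervalIntegral.integral_congr fun ω _ ↦ ?_
        rw [← integral_div]
        simp only [hK_def, mul_div_right_comm]
    _ = ∫ y, ∫ ω in ε..R, K ω y := intervalIntegral_integral_swap hK
    _ = ∫ y, (sineIntegral (R * y) - sineIntegral (ε * y)) * g y := by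
        simp only [hK_def, intervalIntegral.integral_mul_const, integral_sin_mul_div]

lemma integral_Ioi_sin_transform_div (hg : Integrable g)
    (hF : IntegrableOn (fun ω ↦ (∫ y, sin (ω * y) * g y) / ω) (Ioi 0)) :
    ∫ ω in Ioi 0, (∫ y, sin (ω * y) * g y) / ω = π / 2 * ∫ y, Real.sign y * g y := by
  have hSi_sub : ∀ R, Continuous fun y ↦ sineIntegral (R * y) - sineIntegral (R⁻¹ * y) := fun R ↦
    (continuous_sineIntegral.comp (continuous_const_mul R)).sub
      (continuous_sineIntegral.comp (continuous_const_mul R⁻¹))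
  have hlim : Tendsto (fun R ↦ ∫ y, (sineIntegral (R * y) - sineIntegral (R⁻¹ * y)) * g y)
      atTop (𝓝 (∫ y, Real.sign y * (π / 2) * g y)) := by
    refine tendsto_integral_filter_of_dominated_convergence (fun y ↦ 8 * ‖g y‖)
      (.of_forall fun R ↦ (hSi_sub R).aestronglyMeasurable.mul hg.1)
      (.of_forall fun R ↦ .of_forall fun y ↦ ?_) (hg.norm.const_mul 8) (.of_forall fun y ↦ ?_)
    · rw [norm_mul]
      gcongr
      calc ‖sineIntegral (R * y) - sineIntegral (R⁻¹ * y)‖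
          ≤ |sineIntegral (R * y)| + |sineIntegral (R⁻¹ * y)| := abs_sub _ _
        _ ≤ 8 := by linarith [abs_sineIntegral_le (R * y), abs_sineIntegral_le (R⁻¹ * y)]
    · have h0 : Tendsto (fun R ↦ sineIntegral (R⁻¹ * y)) atTop (𝓝 0) := by
        simpa [Function.comp_def, sineIntegral_zero] using (continuous_sineIntegral.tendsto 0).comp
          (by simpa using tendsto_inv_atTop_zero.mul_const y : Tendsto (· ⁻¹ * y) atTop (𝓝 0))
      simpa using ((tendsto_sineIntegral_mul_atTop y).sub h0).mul_const (g y)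
  refine (tendsto_nhds_unique (tendsto_intervalIntegral_inv_self_integral_Ioi hF)
    (hlim.congr' ?_)).trans ?_
  · filter_upwards [eventually_ge_atTop 1] with R hR
    exact (intervalIntegral_sin_transform_div hg (by positivity)
      ((inv_le_one_of_one_le₀ hR).trans hR)).symm
  · rw [← integral_const_mul]
    congr 1 with y
    ring

end SineTransform

lemma integrable_sin_mul {h : ℝ → ℝ} (hh : Integrable h) (ω : ℝ) :
    Integrable fun y ↦ sin (ω * y) * h y :=
  hh.bdd_mul (c := 1) (by fun_prop) (.of_forall fun _ ↦ abs_sin_le_one _)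

lemma im_integral_cexp_mul_ofReal (z : ℂ) {h : ℝ → ℝ}
    (hh : Integrable fun y ↦ exp (z.re * y) * h y) :
    (∫ y : ℝ, Complex.exp (z * y) * h y).im = ∫ y, sin (z.im * y) * (exp (z.re * y) * h y) := by
  have hsplit : ∀ y : ℝ, Complex.exp (z * y) * h y
      = Complex.exp (↑(z.im * y) * Complex.I) * ↑(exp (z.re * y) * h y) := fun y ↦ by
    push_cast
    rw [← mul_assoc, ← Complex.exp_add]
    congr 2
    conv_lhs => rw [← Complex.re_add_im z]
    ring
  have hint : Integrable fun y : ℝ ↦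
      Complex.exp (↑(z.im * y) * Complex.I) * ↑(exp (z.re * y) * h y) :=
    hh.ofReal.bdd_mul (c := 1) (by fun_prop)
      (.of_forall fun _ ↦ (Complex.norm_exp_ofReal_mul_I _).le)
  simp_rw [hsplit]
  rw [← RCLike.im_to_complex, ← integral_im hint]
  congr 1 with y
  rw [RCLike.im_to_complex, Complex.im_mul_ofReal, Complex.exp_ofReal_mul_I_im]

lemma re_div_ofReal_mul_I (w : ℂ) (ω : ℝ) : (w / (ω * Complex.I)).re = w.im / ω := by
  rw [mul_comm, ← div_div, Complex.div_ofReal_re, Complex.div_I]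
  simp

lemma sign_mul_exp_sub_one (y : ℝ) : Real.sign y * (exp y - 1) = |exp y - 1| := by
  rcases lt_trichotomy y 0 with hy | rfl | hy
  · rw [Real.sign_of_neg hy, abs_of_neg (by linarith [exp_lt_one_iff.2 hy])]
    ring
  · simp
  · rw [Real.sign_of_pos hy, abs_of_pos (by linarith [one_lt_exp_iff.2 hy]), one_mul]

theorem abs_exp_sub_one_fourier_general (p : ℝ → ℝ)
    (hint : Integrable p)
    (hexp : Integrable (fun y : ℝ => Real.exp y * p y))
    (M₀ M₁ : ℝ → ℂ)
    (hM₀ : ∀ ω : ℝ, M₀ ω = ∫ y : ℝ, Complex.exp (ω * Complex.I * y) * (p y : ℂ))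
    (hM₁ : ∀ ω : ℝ, M₁ ω = ∫ y : ℝ, Complex.exp ((1 + ω * Complex.I) * y) * (p y : ℂ))
    (hI₀ : IntegrableOn (fun ω : ℝ => (M₀ ω).im / ω) (Set.Ioi 0))
    (hI₁ : IntegrableOn (fun ω : ℝ => (M₁ ω).im / ω) (Set.Ioi 0)) :
    ∫ y : ℝ, |Real.exp y - 1| * p y
      = (2 / π) * ∫ ω in Set.Ioi (0 : ℝ), ((M₁ ω - M₀ ω) / (ω * Complex.I)).re := by
  set g : ℝ → ℝ := fun y ↦ exp y * p y - p y with hg_def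
  have hg : Integrable g := hexp.sub hint
  have hIm₀ : ∀ ω : ℝ, (M₀ ω).im = ∫ y, sin (ω * y) * p y := fun ω ↦ by
    simpa [hM₀] using im_integral_cexp_mul_ofReal (ω * Complex.I) (h := p) (by simpa using hint)
  have hIm₁ : ∀ ω : ℝ, (M₁ ω).im = ∫ y, sin (ω * y) * (exp y * p y) := fun ω ↦ by
    simpa [hM₁] using im_integral_cexp_mul_ofReal (1 + ω * Complex.I) (h := p) (by simpa using hexp)
  have hF : ∀ ω : ℝ, ((M₁ ω - M₀ ω) / (ω * Complex.I)).re = (∫ y, sin (ω * y) * g y) / ω :=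
    fun ω ↦ by
      rw [re_div_ofReal_mul_I, Complex.sub_im, hIm₀, hIm₁,
        ← integral_sub (integrable_sin_mul hexp ω) (integrable_sin_mul hint ω)]
      simp only [hg_def, mul_sub]
  have hF_int : IntegrableOn (fun ω ↦ (∫ y, sin (ω * y) * g y) / ω) (Ioi 0) :=
    (hI₁.sub hI₀).congr_fun
      (fun ω _ ↦ by rw [← hF, re_div_ofReal_mul_I, Complex.sub_im, sub_div, Pi.sub_apply])
      measurableSet_Ioi
  calc ∫ y, |exp y - 1| * p y = (2 / π) * (π / 2 * ∫ y, Real.sign y * g y) := by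
        rw [← mul_assoc, show 2 / π * (π / 2) = 1 by field_simp, one_mul]
        congr 1 with y
        rw [hg_def, ← sign_mul_exp_sub_one]
        ring
    _ = (2 / π) * ∫ ω in Ioi 0, ((M₁ ω - M₀ ω) / (ω * Complex.I)).re := by
        rw [← integral_Ioi_sin_transform_div hg hF_int]
        simp only [hF]

/-- Model-free content of Proposition 3.1: for a log-return density `p`,
`E[|e^Y - 1|] = (2/π) ∫_0^∞ Re[(M(1+iω) - M(iω))/(iω)] dω`,
where `M(iω)` and `M(1+iω)` are the indicated Fourier/moment transforms of `p`. -/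
theorem abs_exp_sub_one_fourier (p : ℝ → ℝ)
    (hmeas : Measurable p) (hpos : ∀ᵐ y : ℝ, 0 ≤ p y)
    (hint : Integrable p) (hnorm : ∫ y : ℝ, p y = 1)
    (hexp : Integrable (fun y : ℝ => Real.exp y * p y))
    (M₀ M₁ : ℝ → ℂ)
    (hM₀ : ∀ ω : ℝ, M₀ ω = ∫ y : ℝ, Complex.exp (ω * Complex.I * y) * (p y : ℂ))
    (hM₁ : ∀ ω : ℝ, M₁ ω = ∫ y : ℝ, Complex.exp ((1 + ω * Complex.I) * y) * (p y : ℂ))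
    (hI₀ : IntegrableOn (fun ω : ℝ => (M₀ ω).im / ω) (Set.Ioi 0))
    (hI₁ : IntegrableOn (fun ω : ℝ => (M₁ ω).im / ω) (Set.Ioi 0)) :
    ∫ y : ℝ, |Real.exp y - 1| * p y
      = (2 / π) * ∫ ω in Set.Ioi (0 : ℝ), ((M₁ ω - M₀ ω) / (ω * Complex.I)).re :=
  abs_exp_sub_one_fourier_general p hint hexp M₀ M₁ hM₀ hM₁ hI₀ hI₁
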